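/- Let (S,𝔉,τ) be a PM space and I a strongly admissible ideal on ℕ×ℕ with property (AP₂). Then a double sequence in S is strong I-statistically pre-Cauchy if and only if it is strong I*-statistically pre-Cauchy. -/

import Mathlib

open Set

/-- A distance distribution function. -/
structure DDF where
  toFun : ℝ → ℝ
  mono' : Monotone toFun
  nonneg' : ∀ x, 0 ≤ toFun x
  le_one' : ∀ x, toFun x ≤ 1
  zero' : ∀ x ≤ 0, toFun x = 0
  tendsto_one' : Filter.Tendsto toFun Filter.atTop (nhds 1)
  leftCont' : ∀ x > 0, ContinuousWithinAt toFun (Set.Iio x) x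

instance : CoeFun DDF fun _ => ℝ → ℝ := ⟨DDF.toFun⟩

/-- The unit step at 0. -/
noncomputable def eps0 : DDF where
  toFun x := if 0 < x then 1 else 0
  mono' := by
    intro a b hab
    by_cases ha : 0 < a
    · simp [ha, lt_of_lt_of_le ha hab]
    · by_cases hb : 0 < b <;> simp [ha, hb]
  nonneg' := by intro x; split_ifs <;> norm_num
  le_one' := by intro x; split_ifs <;> norm_num
  zero' := by intro x hx; simp [not_lt.mpr hx]
  tendsto_one' := by
    have h : (fun _ : ℝ => (1 : ℝ)) =ᶠ[Filter.atTop]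
        fun x : ℝ => if 0 < x then (1:ℝ) else 0 := by
      filter_upwards [Filter.eventually_gt_atTop (0:ℝ)] with x hx
      simp [hx]
    exact tendsto_const_nhds.congr' h
  leftCont' := by
    intro x hx
    have h : (fun _ : ℝ => (1 : ℝ)) =ᶠ[nhdsWithin x (Set.Iio x)]
        fun y : ℝ => if 0 < y then (1:ℝ) else 0 := by
      have hev : ∀ᶠ y in nhds x, (0:ℝ) < y := eventually_gt_nhds hx
      filter_upwards [nhdsWithin_le_nhds hev] with y hy
      simp [hy]
    have : Filter.Tendsto (fun y : ℝ => if 0 < y then (1:ℝ) else 0)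
        (nhdsWithin x (Set.Iio x)) (nhds 1) := tendsto_const_nhds.congr' h
    simpa [ContinuousWithinAt, hx] using this

/-- The modified Lévy metric on distance distribution functions. -/
noncomputable def dL (F G : DDF) : ℝ :=
  sInf {h : ℝ | 0 < h ∧ h ≤ 1 ∧ ∀ x : ℝ, 0 < x → x < 1 / h →
    (F (x - h) - h ≤ G x ∧ G x ≤ F (x + h) + h ∧
     G (x - h) - h ≤ F x ∧ F x ≤ G (x + h) + h)}

/-- A probabilistic metric space under a triangle function. -/
structure PMSpace (S : Type*) where
  F : S → S → DDF
  tri : DDF → DDF → DDF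
  F_self : ∀ a, F a a = eps0
  F_ne : ∀ a b, a ≠ b → F a b ≠ eps0
  F_symm : ∀ a b, F a b = F b a
  F_triangle : ∀ a b c, ∀ x : ℝ, (tri (F a b) (F b c)) x ≤ (F a c) x
  tri_comm : ∀ G H, tri G H = tri H G
  tri_assoc : ∀ G H K, tri (tri G H) K = tri G (tri H K)
  tri_mono : ∀ G G' H, (∀ x, G x ≤ G' x) → ∀ x, (tri G H) x ≤ (tri G' H) x
  tri_id : ∀ G, tri eps0 G = G

/-- Continuity of the triangle function with respect to the Lévy metric. -/
def TriContinuous (P : PMSpace S) : Prop :=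
  ∀ G H : DDF, ∀ ε > 0, ∃ η > 0, ∀ G' H' : DDF,
    dL G G' < η → dL H H' < η → dL (P.tri G H) (P.tri G' H') < ε

/-- Ideals, admissibility. -/
def IsIdeal {α : Type*} (I : Set (Set α)) : Prop :=
  ∅ ∈ I ∧ (∀ A B : Set α, A ∈ I → B ∈ I → A ∪ B ∈ I) ∧
    (∀ A B : Set α, B ⊆ A → A ∈ I → B ∈ I)

def Admissible (I : Set (Set (ℕ × ℕ))) : Prop :=
  IsIdeal I ∧ Set.univ ∉ I ∧ ∀ p : ℕ × ℕ, ({p} : Set (ℕ × ℕ)) ∈ I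

def StronglyAdmissible (I : Set (Set (ℕ × ℕ))) : Prop :=
  IsIdeal I ∧ Set.univ ∉ I ∧
    ∀ i : ℕ, ({i} ×ˢ (Set.univ : Set ℕ)) ∈ I ∧ ((Set.univ : Set ℕ) ×ˢ {i}) ∈ I

/-- `dens A m n` is `(1/(mn)) |{(j,k) ∈ A : j ≤ m, k ≤ n}|`. -/
noncomputable def dens (A : Set (ℕ × ℕ)) (m n : ℕ) : ℝ :=
  ({jk ∈ A | 1 ≤ jk.1 ∧ jk.1 ≤ m ∧ 1 ≤ jk.2 ∧ jk.2 ≤ n}.ncard : ℝ) / (m * n)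

/-- `dens2 A m n` is `(1/(m²n²)) |{((j,k),(p,q)) ∈ A : j,p ≤ m, k,q ≤ n}|`. -/
noncomputable def dens2 (A : Set ((ℕ × ℕ) × (ℕ × ℕ))) (m n : ℕ) : ℝ :=
  ({q ∈ A | 1 ≤ q.1.1 ∧ q.1.1 ≤ m ∧ 1 ≤ q.2.1 ∧ q.2.1 ≤ m ∧
      1 ≤ q.1.2 ∧ q.1.2 ≤ n ∧ 1 ≤ q.2.2 ∧ q.2.2 ≤ n}.ncard : ℝ) /
    ((m : ℝ) ^ 2 * (n : ℝ) ^ 2)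

variable {S : Type*}

/-- Strong `I`-statistically pre-Cauchy, via `d_L(F_{x_{jk}x_{pq}}, ε₀) ≥ t`. -/
def StrongIStatPreCauchy (I : Set (Set (ℕ × ℕ))) (P : PMSpace S)
    (x : ℕ → ℕ → S) : Prop :=
  ∀ t > (0:ℝ), ∀ δ > (0:ℝ),
    {mn : ℕ × ℕ | δ ≤ dens2
      {q : (ℕ × ℕ) × (ℕ × ℕ) |
        t ≤ dL (P.F (x q.1.1 q.1.2) (x q.2.1 q.2.2)) eps0} mn.1 mn.2} ∈ I

/-- Strong `I*`-statistically pre-Cauchy: there is `M ∈ F(I)` along which the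
pre-Cauchy counting ratios tend to `0` as `m,n → ∞`. -/
def StrongIStarStatPreCauchy (I : Set (Set (ℕ × ℕ))) (P : PMSpace S)
    (x : ℕ → ℕ → S) : Prop :=
  ∃ M : Set (ℕ × ℕ), Mᶜ ∈ I ∧ ∀ t > (0:ℝ), ∀ ε > (0:ℝ), ∃ N : ℕ,
    ∀ m n : ℕ, (m, n) ∈ M → N ≤ m → N ≤ n →
      dens2 {q : (ℕ × ℕ) × (ℕ × ℕ) |
        t ≤ dL (P.F (x q.1.1 q.1.2) (x q.2.1 q.2.2)) eps0} m n < ε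

/-- A set contained in a finite union of rows and columns of `ℕ×ℕ`. -/
def RowColBounded (E : Set (ℕ × ℕ)) : Prop :=
  ∃ s : Finset ℕ, E ⊆ (⋃ i ∈ s, ({i} : Set ℕ) ×ˢ (Set.univ : Set ℕ)) ∪
    ⋃ i ∈ s, (Set.univ : Set ℕ) ×ˢ ({i} : Set ℕ)

/-- Property (AP₂) of an ideal on `ℕ×ℕ`. -/
def AP2 (I : Set (Set (ℕ × ℕ))) : Prop :=
  ∀ A : ℕ → Set (ℕ × ℕ), (∀ j, A j ∈ I) → (Pairwise (Function.onFun Disjoint A)) →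
    ∃ B : ℕ → Set (ℕ × ℕ), (∀ j, RowColBounded (symmDiff (A j) (B j))) ∧ (⋃ j, B j) ∈ I

/-! The direction `I* ⇒ I` only uses that a set `{(m, n) | m < N ∨ n < N}` lies in finitely many
rows and columns, hence in `I`. For `I ⇒ I*`, apply (AP₂) to the disjointification of the sets
`P i` where the counting ratio at level `t = δ = 1/(i+1)` is at least `δ`: the complement `M` of
`⋃ B_j` meets each `P i` only inside finitely many rows and columns, and the ratio is antitone
in `t`. -/

open Filter

namespace IsIdeal

variable {α : Type*} {I : Set (Set α)}

lemma mono (hI : IsIdeal I) {A B : Set α} (hAB : A ⊆ B) (hB : B ∈ I) : A ∈ I :=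
  hI.2.2 B A hAB hB

lemma union_mem (hI : IsIdeal I) {A B : Set α} (hA : A ∈ I) (hB : B ∈ I) : A ∪ B ∈ I :=
  hI.2.1 A B hA hB

lemma biUnion_finset_mem {ι : Type*} (hI : IsIdeal I) (s : Finset ι) {f : ι → Set α}
    (hf : ∀ i ∈ s, f i ∈ I) : (⋃ i ∈ s, f i) ∈ I := by
  classical
  induction s using Finset.induction with
  | empty => simpa using hI.1
  | insert a s _ ih =>
    rw [Finset.set_biUnion_insert]
    exact hI.union_mem (hf a (s.mem_insert_self a)) (ih fun i hi => hf i (s.mem_insert_of_mem hi))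

end IsIdeal

-- `atTop` on `ℕ × ℕ` carries the product order, so it is the filter of `m, n → ∞`.
lemma StronglyAdmissible.compl_mem_of_mem_atTop {I : Set (Set (ℕ × ℕ))}
    (hI : StronglyAdmissible I) {s : Set (ℕ × ℕ)} (hs : s ∈ (atTop : Filter (ℕ × ℕ))) :
    sᶜ ∈ I := by
  obtain ⟨N, hN⟩ := eventually_atTop_prod_self.1 hs
  have hlines : (⋃ i ∈ Finset.range N,
      ({i} ×ˢ (univ : Set ℕ) ∪ (univ : Set ℕ) ×ˢ {i})) ∈ I :=
    hI.1.biUnion_finset_mem _ fun i _ => hI.1.union_mem (hI.2.2 i).1 (hI.2.2 i).2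
  refine hI.1.mono (fun p hp => ?_) hlines
  simp only [mem_iUnion, Finset.mem_range, mem_union, mem_prod, mem_singleton_iff, mem_univ,
    and_true, true_and]
  rcases lt_or_ge p.1 N with h1 | h1
  · exact ⟨p.1, h1, Or.inl rfl⟩
  rcases lt_or_ge p.2 N with h2 | h2
  · exact ⟨p.2, h2, Or.inr rfl⟩
  exact absurd (hN p.1 p.2 h1 h2) hp

lemma RowColBounded.compl_mem_atTop {E : Set (ℕ × ℕ)} (hE : RowColBounded E) :
    Eᶜ ∈ (atTop : Filter (ℕ × ℕ)) := by
  obtain ⟨s, hs⟩ := hE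
  refine eventually_atTop_prod_self.2 ⟨s.sup id + 1, fun m n hm hn hmn => ?_⟩
  have hlt : ∀ i ∈ s, i < s.sup id + 1 := fun i hi => Nat.lt_succ_of_le (s.le_sup (f := id) hi)
  have hline := hs hmn
  simp only [mem_union, mem_iUnion, mem_prod, mem_singleton_iff, mem_univ, and_true,
    true_and, exists_prop] at hline
  rcases hline with ⟨i, hi, rfl⟩ | ⟨i, hi, rfl⟩
  · exact (hlt m hi).not_ge hm
  · exact (hlt n hi).not_ge hn

lemma AP2.exists_compl_mem_eventually_notMem {I : Set (Set (ℕ × ℕ))} (hI : IsIdeal I)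
    (hAP : AP2 I) {P : ℕ → Set (ℕ × ℕ)} (hP : ∀ i, P i ∈ I) :
    ∃ M : Set (ℕ × ℕ), Mᶜ ∈ I ∧ ∀ i, ∀ᶠ p in atTop, p ∈ M → p ∉ P i := by
  obtain ⟨B, hB, hBI⟩ := hAP (disjointed P) (fun j => hI.mono (disjointed_subset P j) (hP j))
    (disjoint_disjointed P)
  refine ⟨(⋃ j, B j)ᶜ, by rwa [compl_compl], fun i => ?_⟩
  have hfar : ∀ᶠ p in atTop, ∀ j ∈ Finset.range (i + 1), p ∉ symmDiff (disjointed P j) (B j) :=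
    (Finset.eventually_all _).2 fun j _ => (hB j).compl_mem_atTop
  filter_upwards [hfar] with p hp hpM hpP
  have hpP' : p ∈ ⋃ j ∈ Finset.range (i + 1), disjointed P j := by
    rw [biUnion_range_succ_disjointed]
    exact le_partialSups P i hpP
  obtain ⟨j, hj, hpj⟩ := mem_iUnion₂.1 hpP'
  exact hp j hj (Or.inl ⟨hpj, fun hpB => hpM (mem_iUnion.2 ⟨j, hpB⟩)⟩)

lemma AP2.exists_compl_mem_eventually_lt {I : Set (Set (ℕ × ℕ))} (hI : IsIdeal I)
    (hAP : AP2 I) {f : ℝ → ℕ × ℕ → ℝ} (hf : ∀ ⦃s t⦄, s ≤ t → ∀ p, f t p ≤ f s p)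
    (h : ∀ t > (0 : ℝ), ∀ δ > (0 : ℝ), {p | δ ≤ f t p} ∈ I) :
    ∃ M : Set (ℕ × ℕ), Mᶜ ∈ I ∧ ∀ t > (0 : ℝ), ∀ ε > (0 : ℝ),
      ∀ᶠ p in atTop, p ∈ M → f t p < ε := by
  obtain ⟨M, hM, hMP⟩ := hAP.exists_compl_mem_eventually_notMem hI
    (P := fun i => {p | 1 / (i + 1 : ℝ) ≤ f (1 / (i + 1)) p})
    fun i => h _ Nat.one_div_pos_of_nat _ Nat.one_div_pos_of_nat
  refine ⟨M, hM, fun t ht ε hε => ?_⟩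
  obtain ⟨i, hi⟩ := exists_nat_one_div_lt (lt_min ht hε)
  filter_upwards [hMP i] with p hp hpM
  calc f t p ≤ f (1 / (i + 1)) p := hf (hi.le.trans (min_le_left _ _)) p
    _ < 1 / (i + 1) := not_le.1 (hp hpM)
    _ < ε := hi.trans_le (min_le_right _ _)

lemma StronglyAdmissible.setOf_le_mem {I : Set (Set (ℕ × ℕ))} (hI : StronglyAdmissible I)
    {M : Set (ℕ × ℕ)} (hM : Mᶜ ∈ I) {g : ℕ × ℕ → ℝ} {δ : ℝ}
    (hg : ∀ᶠ p in atTop, p ∈ M → g p < δ) : {p | δ ≤ g p} ∈ I := by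
  refine hI.1.mono (fun p hp => ?_) (hI.1.union_mem hM (hI.compl_mem_of_mem_atTop hg))
  by_cases hpM : p ∈ M
  · exact Or.inr fun hlt => (hlt hpM).not_ge hp
  · exact Or.inl hpM

lemma dens2_mono {A B : Set ((ℕ × ℕ) × (ℕ × ℕ))} (h : A ⊆ B) (m n : ℕ) :
    dens2 A m n ≤ dens2 B m n := by
  unfold dens2
  gcongr
  refine ((finite_Iic (m, n)).prod (finite_Iic (m, n))).subset ?_
  rintro q ⟨-, -, h1, -, h2, -, h3, -, h4⟩
  exact ⟨⟨h1, h3⟩, h2, h4⟩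

noncomputable def preCauchyRatio (P : PMSpace S) (x : ℕ → ℕ → S) (t : ℝ)
    (p : ℕ × ℕ) : ℝ :=
  dens2 {q : (ℕ × ℕ) × (ℕ × ℕ) | t ≤ dL (P.F (x q.1.1 q.1.2) (x q.2.1 q.2.2)) eps0} p.1 p.2

lemma preCauchyRatio_le_of_le (P : PMSpace S) (x : ℕ → ℕ → S) ⦃s t : ℝ⦄
    (hst : s ≤ t) (p : ℕ × ℕ) : preCauchyRatio P x t p ≤ preCauchyRatio P x s p :=
  dens2_mono (fun _ hq => hst.trans hq) p.1 p.2

lemma strongIStarStatPreCauchy_iff_eventually {I : Set (Set (ℕ × ℕ))}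
    {P : PMSpace S} {x : ℕ → ℕ → S} :
    StrongIStarStatPreCauchy I P x ↔ ∃ M : Set (ℕ × ℕ), Mᶜ ∈ I ∧ ∀ t > (0 : ℝ), ∀ ε > (0 : ℝ),
      ∀ᶠ p in atTop, p ∈ M → preCauchyRatio P x t p < ε := by
  simp only [eventually_atTop_prod_self]
  refine exists_congr fun M => and_congr_right fun _ => forall₄_congr fun t _ ε _ =>
    exists_congr fun N => forall₂_congr fun m n => ?_
  exact ⟨fun h h₁ h₂ hM => h hM h₁ h₂, fun h hM h₁ h₂ => h h₁ h₂ hM⟩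

theorem strongIStatPreCauchy_iff_strongIStarStatPreCauchy_general
    (P : PMSpace S)
    (I : Set (Set (ℕ × ℕ))) (hI : StronglyAdmissible I) (hAP : AP2 I)
    (x : ℕ → ℕ → S) :
    StrongIStatPreCauchy I P x ↔ StrongIStarStatPreCauchy I P x := by
  rw [strongIStarStatPreCauchy_iff_eventually]
  constructor
  · exact hAP.exists_compl_mem_eventually_lt hI.1 (preCauchyRatio_le_of_le P x)
  · rintro ⟨M, hM, hlim⟩ t ht δ hδ
    exact hI.setOf_le_mem hM (hlim t ht δ hδ)

/-- For a strongly admissible ideal `I` with property (AP₂), a double sequence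
in a PM space is strong `I`-statistically pre-Cauchy iff it is strong
`I*`-statistically pre-Cauchy. -/
theorem strongIStatPreCauchy_iff_strongIStarStatPreCauchy
    (P : PMSpace S) (hτ : TriContinuous P)
    (I : Set (Set (ℕ × ℕ))) (hI : StronglyAdmissible I) (hAP : AP2 I)
    (x : ℕ → ℕ → S) :
    StrongIStatPreCauchy I P x ↔ StrongIStarStatPreCauchy I P x :=
  strongIStatPreCauchy_iff_strongIStarStatPreCauchy_general P I hI hAP x
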